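/- (Planar chain rule) Let g ∈ K{{x}} with ord_x(g) ≥ 1, let φ = φ_g : K{{x}} → K{{x}} be the continuous K-algebra homomorphism with φ(x) = g, and let dφ : K{{x,y} → K{{x,y} be the unique continuous K-algebra homomorphism with dφ(x) = g and dφ(y) = dg. Then (dφ) ∘ d = d ∘ φ as maps K{{x}} → K{{x,y}. -/

import Mathlib

namespace Planar

inductive PVar : Type
  | vx : PVar
  | vy : PVar
deriving DecidableEq

/-- A finite planar reduced rooted tree: every internal vertex has at least two
(ordered) children, encoded as `node t₁ t₂ rest` with children list `t₁ :: t₂ :: rest`;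
leaves are labeled by a variable (an isomorphism class of such a labeled tree is
faithfully represented by this inductive data). -/
inductive PTree : Type
  | leaf : PVar → PTree
  | node : PTree → PTree → List PTree → PTree

namespace PTree

/-- The number of leaves carrying the label `v`. -/
def countLeaf (v : PVar) : PTree → ℕ
  | .leaf w => if w = v then 1 else 0
  | .node t1 t2 rest =>
      countLeaf v t1 + countLeaf v t2 + (rest.attach.map fun t => countLeaf v t.1).sum
decreasing_by
  all_goals simp_wf
  · omega
  · omega
  · have := List.sizeOf_lt_of_mem t.2
    omega

end PTree

/-- `P'(x,y)`: planar monomials plus the empty tree `1_P` (= `none`). -/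
abbrev PT := Option PTree

/-- `deg_x`: the number of leaves labeled `x`. -/
def degx (S : PT) : ℕ := S.elim 0 (PTree.countLeaf .vx)

/-- `deg_y`: the number of leaves labeled `y`. -/
def degy (S : PT) : ℕ := S.elim 0 (PTree.countLeaf .vy)

/-- `m`-ary grafting `•_m` on `P'(x,y)` (`m = l.length`): join the non-trivial entries
at a new root; the conventions `•_m(1_P,…,1_P) = 1_P`, dropping of `1_P`-entries and
`•_2(S,1_P) = •_2(1_P,S) = S` amount to discarding the `1_P`-entries first. -/
def graft (l : List PT) : PT :=
  match l.reduceOption with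
  | [] => none
  | [t] => some t
  | t1 :: t2 :: ts => some (.node t1 t2 ts)

variable (K : Type) [Field K]

/-- The algebra `K{{x,y}` of planar power series in `x` and polynomials in `y`:
functions on `P'(x,y)` such that for every `n` only finitely many monomials of
`x`-degree `n` have a nonzero coefficient. -/
def PSer : Type := {f : PT → K // ∀ n : ℕ, {S : PT | f S ≠ 0 ∧ degx S = n}.Finite}

variable {K}

namespace PSer

private lemma finite_add (f g : PSer K) (n : ℕ) :
    {S : PT | f.1 S + g.1 S ≠ 0 ∧ degx S = n}.Finite := by
  apply ((f.2 n).union (g.2 n)).subset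
  rintro S ⟨hne, hdeg⟩
  by_cases h1 : f.1 S = 0
  · exact Or.inr ⟨by simpa [h1] using hne, hdeg⟩
  · exact Or.inl ⟨h1, hdeg⟩

private lemma finite_neg (f : PSer K) (n : ℕ) :
    {S : PT | -f.1 S ≠ 0 ∧ degx S = n}.Finite := by
  apply (f.2 n).subset
  rintro S ⟨hne, hdeg⟩
  exact ⟨by simpa using hne, hdeg⟩

private lemma finite_zero (n : ℕ) :
    {S : PT | (0 : K) ≠ 0 ∧ degx S = n}.Finite := by
  convert Set.finite_empty using 1
  ext S; simp

private lemma finite_smul (a : K) (f : PSer K) (n : ℕ) :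
    {S : PT | a * f.1 S ≠ 0 ∧ degx S = n}.Finite := by
  apply (f.2 n).subset
  rintro S ⟨hne, hdeg⟩
  exact ⟨fun h => hne (by simp [h]), hdeg⟩

noncomputable instance : AddCommGroup (PSer K) where
  add f g := ⟨fun S => f.1 S + g.1 S, finite_add f g⟩
  zero := ⟨fun _ => 0, finite_zero⟩
  neg f := ⟨fun S => -f.1 S, finite_neg f⟩
  add_assoc f g h := Subtype.ext (funext fun S => add_assoc _ _ _)
  add_comm f g := Subtype.ext (funext fun S => add_comm _ _)
  zero_add f := Subtype.ext (funext fun S => zero_add _)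
  add_zero f := Subtype.ext (funext fun S => add_zero _)
  neg_add_cancel f := Subtype.ext (funext fun S => neg_add_cancel _)
  nsmul n f := ⟨fun S => (n : K) * f.1 S, finite_smul _ f⟩
  nsmul_zero f := Subtype.ext (funext fun S => by
    show ((0 : ℕ) : K) * f.1 S = (0 : K); simp)
  nsmul_succ n f := Subtype.ext (funext fun S => by
    show ((n + 1 : ℕ) : K) * f.1 S = (n : K) * f.1 S + f.1 S; push_cast; ring)
  zsmul n f := ⟨fun S => (n : K) * f.1 S, finite_smul _ f⟩
  zsmul_zero' f := Subtype.ext (funext fun S => by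
    show ((0 : ℤ) : K) * f.1 S = (0 : K); simp)
  zsmul_succ' n f := Subtype.ext (funext fun S => by
    show ((Int.ofNat n.succ : ℤ) : K) * f.1 S = ((Int.ofNat n : ℤ) : K) * f.1 S + f.1 S
    simp only [Int.ofNat_eq_coe]; push_cast; ring)
  zsmul_neg' n f := Subtype.ext (funext fun S => by
    show ((Int.negSucc n : ℤ) : K) * f.1 S = -(((n.succ : ℤ) : K) * f.1 S)
    simp [Int.negSucc_eq]; push_cast; ring)

noncomputable instance : Module K (PSer K) where
  smul a f := ⟨fun S => a * f.1 S, finite_smul a f⟩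
  one_smul f := Subtype.ext (funext fun S => one_mul _)
  mul_smul a b f := Subtype.ext (funext fun S => mul_assoc _ _ _)
  smul_zero a := Subtype.ext (funext fun S => mul_zero _)
  smul_add a f g := Subtype.ext (funext fun S => mul_add _ _ _)
  add_smul a b f := Subtype.ext (funext fun S => add_mul _ _ _)
  zero_smul f := Subtype.ext (funext fun S => zero_mul _)

@[simp] lemma add_coeff (f g : PSer K) (S : PT) : (f + g).1 S = f.1 S + g.1 S := rfl
@[simp] lemma smul_coeff (a : K) (f : PSer K) (S : PT) : (a • f).1 S = a * f.1 S := rfl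
@[simp] lemma zero_coeff (S : PT) : (0 : PSer K).1 S = 0 := rfl

end PSer

open PSer

/-- The indicator series of a single planar monomial `S ∈ P'(x,y)`. -/
noncomputable def mono (S : PT) : PSer K := by
  classical
  refine ⟨fun T => if T = S then 1 else 0, fun n => (Set.finite_singleton S).subset ?_⟩
  rintro T ⟨h1, -⟩
  by_contra hc
  exact h1 (if_neg (by simpa [Set.mem_singleton_iff] using hc))

/-- The unit series `1_P` (the empty tree). -/
noncomputable def onePS : PSer K := mono none

/-- The series `x` (the one-vertex tree labeled `x`). -/
noncomputable def Xps : PSer K := mono (some (.leaf .vx))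

/-- The series `y = dx` (the one-vertex tree labeled `y`). -/
noncomputable def Yps : PSer K := mono (some (.leaf .vy))

/-- Coefficient of the product `•_m(f₁,…,f_m)` at `S`: the (finite) sum of
`c_{S₁}(f₁)⋯c_{S_m}(f_m)` over all decompositions `S = •_m(S₁,…,S_m)`. -/
noncomputable def bulletCoeff (fs : List (PSer K)) (S : PT) : K :=
  ∑ᶠ t ∈ {t : List PT | t.length = fs.length ∧ graft t = S},
    (List.zipWith (fun f u => f.1 u) fs t).prod

open Classical in
/-- The `m`-ary product `•_m(f₁,…,f_m)` on `K{{x,y}` (`m = fs.length`). -/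
noncomputable def bullet (fs : List (PSer K)) : PSer K :=
  if h : ∀ n : ℕ, {S : PT | bulletCoeff fs S ≠ 0 ∧ degx S = n}.Finite
  then ⟨bulletCoeff fs, h⟩ else 0

/-- The `x`-order `ord_x(f) ∈ ℕ ∪ {∞}`: the least `x`-degree of a monomial with
nonzero coefficient (`∞` for `f = 0`). -/
noncomputable def ordx (f : PSer K) : ℕ∞ :=
  ⨅ S ∈ {S : PT | f.1 S ≠ 0}, (degx S : ℕ∞)

/-- The `x`-adic absolute value `|f|ₓ = (1/2)^{ord_x f}` (`= 0` for `f = 0`). -/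
noncomputable def normx (f : PSer K) : ℝ :=
  if ordx f = ⊤ then 0 else (2⁻¹ : ℝ) ^ (ordx f).toNat

/-- The `x`-adic distance `|f - g|ₓ`. -/
noncomputable def distx (f g : PSer K) : ℝ := normx (f - g)

/-- A Cauchy sequence for the `x`-adic distance. -/
def IsCauchySeq (u : ℕ → PSer K) : Prop :=
  ∀ ε : ℝ, 0 < ε → ∃ N : ℕ, ∀ p q : ℕ, N ≤ p → N ≤ q → distx (u p) (u q) < ε

/-- Convergence of a sequence to `f` for the `x`-adic distance. -/
def TendstoSeq (u : ℕ → PSer K) (f : PSer K) : Prop :=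
  ∀ ε : ℝ, 0 < ε → ∃ N : ℕ, ∀ p : ℕ, N ≤ p → distx (u p) f < ε

/-- Continuity of a map between two spaces equipped with distance functions. -/
def ContWrt {α β : Type*} (dα : α → α → ℝ) (dβ : β → β → ℝ) (φ : α → β) : Prop :=
  ∀ a : α, ∀ ε : ℝ, 0 < ε → ∃ δ : ℝ, 0 < δ ∧ ∀ b : α, dα b a < δ → dβ (φ b) (φ a) < ε

/-- The property of being supported on monomials all of whose leaves are labeled `x`. -/
def OnlyX (f : PSer K) : Prop := ∀ S : PT, f.1 S ≠ 0 → degy S = 0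

variable (K) in
/-- `K{{x}}`, the closed unital subalgebra of `K{{x,y}` generated by `x`, as a
submodule: the series supported on `1_P` and trees all of whose leaves are labeled `x`. -/
noncomputable def kxSub : Submodule K (PSer K) where
  carrier := {f | OnlyX f}
  add_mem' := by
    intro f g hf hg S hS
    by_cases h1 : f.1 S = 0
    · exact hg S (by simpa [h1] using hS)
    · exact hf S h1
  zero_mem' := by intro S hS; simp at hS
  smul_mem' := by
    intro a f hf S hS
    exact hf S (fun h => hS (by simp [h]))

variable (K) in
/-- The space `K{{x}}` of planar power series in `x`. -/
abbrev Kx : Type _ := ↥(kxSub K)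

@[simp] lemma mem_kxSub {f : PSer K} : f ∈ kxSub K ↔ OnlyX f := Iff.rfl

/-- The `x`-adic distance on `K{{x}}`. -/
noncomputable def distKx (f g : Kx K) : ℝ := distx f.1 g.1

lemma onePS_mem_kxSub : onePS ∈ kxSub (K := K) := by
  intro S hS
  by_cases h : S = none
  · subst h; rfl
  · exact absurd (if_neg h) hS

lemma Xps_mem_kxSub : Xps ∈ kxSub (K := K) := by
  intro S hS
  by_cases h : S = some (.leaf .vx)
  · subst h; simp [degy, PTree.countLeaf]
  · exact absurd (if_neg h) hS

/-- `1_P` as an element of `K{{x}}`. -/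
noncomputable def oneX : Kx K := ⟨onePS, onePS_mem_kxSub⟩

/-- `x` as an element of `K{{x}}`. -/
noncomputable def xX : Kx K := ⟨Xps, Xps_mem_kxSub⟩

open Classical in
/-- The `m`-ary product `•_m` on `K{{x}}` (`m = fs.length`). -/
noncomputable def bulletX (fs : List (Kx K)) : Kx K :=
  if h : bullet (fs.map (fun f => f.1)) ∈ kxSub K
  then ⟨bullet (fs.map (fun f => f.1)), h⟩ else 0

open Classical in
/-- The homogeneous component of degree `n` (w.r.t. `deg_x`) of a planar power series. -/
noncomputable def comp (f : PSer K) (n : ℕ) : PSer K :=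
  ⟨fun S => if degx S = n then f.1 S else 0, by
    intro m
    apply (f.2 m).subset
    rintro S ⟨h1, h2⟩
    refine ⟨?_, h2⟩
    by_cases hd : degx S = n
    · simpa [hd] using h1
    · simp [hd] at h1⟩

/-- The homogeneous component of degree `n` of an element of `K{{x}}`. -/
noncomputable def compX (f : Kx K) (n : ℕ) : Kx K :=
  ⟨comp f.1 n, by
    intro S hS
    apply (mem_kxSub.mp f.2) S
    simp only [comp] at hS
    by_cases hd : degx S = n
    · simpa [hd] using hS
    · simp [hd] at hS⟩

/-- A substitution homomorphism `φ_{(g,h)} : K{{x,y} → K{{x,y}`: `K`-linear, compatible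
with all grafting operations `•_m` (`m ≥ 2`), unital, `x ↦ g`, `y ↦ h`, and continuous
for the `x`-adic topology. -/
structure IsSubstHom (g h : PSer K) (φ : PSer K → PSer K) : Prop where
  linear : IsLinearMap K φ
  map_graft : ∀ fs : List (PSer K), 2 ≤ fs.length → φ (bullet fs) = bullet (fs.map φ)
  map_one : φ onePS = onePS
  map_X : φ Xps = g
  map_Y : φ Yps = h
  cont : ContWrt distx distx φ

/-- A substitution homomorphism `φ_g : K{{x}} → K{{x}}` with `x ↦ g`. -/
structure IsSubstHomX (g : Kx K) (φ : Kx K → Kx K) : Prop where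
  linear : IsLinearMap K φ
  map_graft : ∀ fs : List (Kx K), 2 ≤ fs.length → φ (bulletX fs) = bulletX (fs.map φ)
  map_one : φ oneX = oneX
  map_X : φ xX = g
  cont : ContWrt distKx distKx φ

/-- The universal derivation `d : K{{x}} → K{{x,y}`: continuous, `K`-linear, `d x = y`,
and satisfying the Leibniz rule for every grafting operation `•_m` (`m ≥ 2`). -/
structure IsUDeriv (d : Kx K → PSer K) : Prop where
  linear : IsLinearMap K d
  cont : ContWrt distKx distx d
  map_X : d xX = Yps
  leibniz : ∀ fs : List (Kx K), 2 ≤ fs.length →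
    d (bulletX fs) = ∑ i : Fin fs.length,
      bullet ((fs.map (fun f => f.1)).set i.1 (d (fs.get i)))

/-- The `k`-ary planar exponential series `Exp_k(x)`: constant coefficient `1`,
coefficient `1` at `x`, and `Exp_k(kx) = •_k(Exp_k(x),…,Exp_k(x))`. -/
structure IsExp (k : ℕ) (f : Kx K) : Prop where
  coeff_one : f.1.1 none = 1
  coeff_X : f.1.1 (some (.leaf .vx)) = 1
  funEq : ∀ φ : Kx K → Kx K, IsSubstHomX ((k : K) • xX) φ →
    φ f = bulletX (List.replicate k f)

/-- `ℓ = Log_k(1+x)`, the planar logarithm attached to a planar exponential series `e`: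
`ord_x ℓ ≥ 1` and `ℓ(e - 1) = x`. -/
structure IsLogOf (e ℓ : Kx K) : Prop where
  ord : 1 ≤ ordx ℓ.1
  eq : ∀ φ : Kx K → Kx K, IsSubstHomX (e - oneX) φ → φ ℓ = xX

end Planar

/-! Both sides of the chain rule are continuous and `K`-linear in `f`, and truncations of `f` are
polynomials converging to `f`, so it suffices to compare them on monomials, by induction on the
tree. On `1_P` both sides vanish and on `x` both give `dg`. On a grafting `•_m(f₁,…,f_m)` the
Leibniz rule expands `d`; `dφ` commutes with grafting and, by the same induction, restricts to `φ`
on `K{{x}}`, so the untouched factors `fⱼ` become `φ(fⱼ)` and the result is the Leibniz expansion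
of `d(•_m(φ f₁,…,φ f_m)) = d(φ(•_m(f₁,…,f_m)))`. -/

lemma finsum_mem_eq_single {α M : Type*} [AddCommMonoid M] {s : Set α} (f : α → M) {a : α}
    (ha : a ∈ s) (h : ∀ x ∈ s, x ≠ a → f x = 0) : ∑ᶠ x ∈ s, f x = f a := by
  classical
  rw [finsum_mem_def, finsum_eq_single _ a fun x hx => ?_, Set.indicator_of_mem ha]
  by_cases hxs : x ∈ s
  · rw [Set.indicator_of_mem hxs, h x hxs hx]
  · exact Set.indicator_of_notMem hxs f

namespace Planar

variable {K : Type} [Field K]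

lemma ContWrt.comp {α β γ : Type*} {dα : α → α → ℝ} {dβ : β → β → ℝ} {dγ : γ → γ → ℝ}
    {g : β → γ} {f : α → β} (hg : ContWrt dβ dγ g) (hf : ContWrt dα dβ f) :
    ContWrt dα dγ (g ∘ f) := by
  intro a ε hε
  obtain ⟨δ₁, hδ₁, hg'⟩ := hg (f a) ε hε
  obtain ⟨δ₂, hδ₂, hf'⟩ := hf a δ₁ hδ₁
  exact ⟨δ₂, hδ₂, fun b hb => hg' _ (hf' b hb)⟩

def degv (v : PVar) (S : PT) : ℕ := S.elim 0 (PTree.countLeaf v)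

lemma countLeaf_node (v : PVar) (t₁ t₂ : PTree) (ts : List PTree) :
    PTree.countLeaf v (.node t₁ t₂ ts) =
      PTree.countLeaf v t₁ + PTree.countLeaf v t₂ + (ts.map (PTree.countLeaf v)).sum := by
  rw [PTree.countLeaf, List.attach_map_val (f := PTree.countLeaf v)]

lemma sum_map_countLeaf_reduceOption (v : PVar) (l : List PT) :
    (l.reduceOption.map (PTree.countLeaf v)).sum = (l.map (degv v)).sum := by
  induction l with
  | nil => rfl
  | cons a l ih => cases a <;> simp [List.reduceOption_cons_of_none,
      List.reduceOption_cons_of_some, ih, degv]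

lemma degv_graft (v : PVar) (l : List PT) : degv v (graft l) = (l.map (degv v)).sum := by
  rw [← sum_map_countLeaf_reduceOption]
  rcases h : l.reduceOption with _ | ⟨t₁, _ | ⟨t₂, ts⟩⟩
  · simp [graft, h, degv]
  · simp [graft, h, degv]
  · simp [graft, h, degv, countLeaf_node]; omega

lemma degv_eq_zero_of_mem {v : PVar} {l : List PT} (hl : degv v (graft l) = 0) :
    ∀ S ∈ l, degv v S = 0 := by
  rw [degv_graft, List.sum_eq_zero_iff] at hl
  exact fun S hS => hl _ (List.mem_map_of_mem hS)

def nodeChildren (t₁ t₂ : PTree) (ts : List PTree) : List PT := some t₁ :: some t₂ :: ts.map some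

lemma graft_nodeChildren (t₁ t₂ : PTree) (ts : List PTree) :
    graft (nodeChildren t₁ t₂ ts) = some (.node t₁ t₂ ts) := by
  simp [graft, nodeChildren, List.reduceOption, List.filterMap_map]

lemma sizeOf_lt_of_mem_nodeChildren {t₁ t₂ : PTree} {ts : List PTree} {S : PT}
    (hS : S ∈ nodeChildren t₁ t₂ ts) : sizeOf S < sizeOf (some (PTree.node t₁ t₂ ts)) := by
  simp only [nodeChildren, List.mem_cons, List.mem_map] at hS
  rcases hS with rfl | rfl | ⟨t, ht, rfl⟩
  · simp; omega
  · simp; omega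
  · have := List.sizeOf_lt_of_mem ht
    simp; omega

open Classical in
lemma mono_coeff (S T : PT) : (mono (K := K) S).1 T = if T = S then 1 else 0 := rfl

lemma exists_of_bulletCoeff_ne_zero {fs : List (PSer K)} {T : PT} (h : bulletCoeff fs T ≠ 0) :
    ∃ t : List PT, t.length = fs.length ∧ graft t = T ∧
      ∀ (i : ℕ) (hi : i < t.length) (hi' : i < fs.length), fs[i].1 t[i] ≠ 0 := by
  obtain ⟨t, ⟨hlen, hgraft⟩, hne⟩ := exists_ne_zero_of_finsum_mem_ne_zero h
  refine ⟨t, hlen, hgraft, fun i hi hi' h0 => hne (List.prod_eq_zero ?_)⟩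
  rw [List.mem_iff_getElem]
  exact ⟨i, by simp [hi, hi'], by rw [List.getElem_zipWith, h0]⟩

lemma bulletCoeff_finite (fs : List (PSer K)) (n : ℕ) :
    {S : PT | bulletCoeff fs S ≠ 0 ∧ degx S = n}.Finite := by
  -- the factors of a contributing decomposition lie in this finite set of monomials
  set A : Set PT := ⋃ f ∈ {f | f ∈ fs}, ⋃ k ∈ Set.Iic n, {S : PT | f.1 S ≠ 0 ∧ degx S = k}
  have hA : A.Finite :=
    fs.finite_toSet.biUnion fun f _ => (Set.finite_Iic n).biUnion fun k _ => f.2 k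
  have hL : {t : List PT | t.length = fs.length ∧ ∀ S ∈ t, S ∈ A}.Finite := by
    have : Finite A := hA.to_subtype
    refine ((List.finite_length_eq A fs.length).image (List.map Subtype.val)).subset ?_
    rintro t ⟨hlen, hmem⟩
    exact ⟨t.attach.map fun S => ⟨S.1, hmem S.1 S.2⟩, by simp [hlen], by simp⟩
  refine (hL.image graft).subset ?_
  rintro T ⟨hne, rfl⟩
  obtain ⟨t, hlen, rfl, hc⟩ := exists_of_bulletCoeff_ne_zero hne
  refine ⟨t, ⟨hlen, fun S hS => ?_⟩, rfl⟩
  obtain ⟨i, hi, rfl⟩ := List.mem_iff_getElem.mp hS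
  have hdeg : degx t[i] ≤ degx (graft t) := by
    rw [show degx = degv .vx from rfl, degv_graft]
    exact List.le_sum_of_mem (List.mem_map_of_mem (List.getElem_mem hi))
  exact Set.mem_biUnion (List.getElem_mem (hlen ▸ hi))
    (Set.mem_biUnion (Set.mem_Iic.mpr hdeg) ⟨hc i hi (hlen ▸ hi), rfl⟩)

lemma bullet_val (fs : List (PSer K)) : (bullet fs).1 = bulletCoeff fs := by
  rw [show bullet fs = ⟨bulletCoeff fs, bulletCoeff_finite fs⟩ from dif_pos (bulletCoeff_finite fs)]

lemma onlyX_bullet {fs : List (PSer K)} (h : ∀ f ∈ fs, OnlyX f) : OnlyX (bullet fs) := by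
  intro T hT
  rw [bullet_val] at hT
  obtain ⟨t, hlen, rfl, hc⟩ := exists_of_bulletCoeff_ne_zero hT
  rw [show degy = degv .vy from rfl, degv_graft, List.sum_eq_zero_iff]
  simp only [List.mem_map, forall_exists_index, and_imp]
  rintro _ S hS rfl
  obtain ⟨i, hi, rfl⟩ := List.mem_iff_getElem.mp hS
  exact h _ (List.getElem_mem (hlen ▸ hi)) _ (hc i hi (hlen ▸ hi))

lemma bulletX_val (fs : List (Kx K)) : (bulletX fs).1 = bullet (fs.map fun f => f.1) := by
  rw [bulletX, dif_pos (show _ ∈ kxSub K from onlyX_bullet (by simp +contextual))]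

open Classical in
lemma prod_zipWith_map_mono (l t : List PT) (h : t.length = l.length) :
    (List.zipWith (fun (f : PSer K) S => f.1 S) (l.map mono) t).prod = if t = l then 1 else 0 := by
  induction l generalizing t with
  | nil => simp [List.length_eq_zero_iff.mp h]
  | cons S l ih =>
    obtain _ | ⟨T, t⟩ := t
    · simp at h
    · simp only [List.map_cons, List.zipWith_cons_cons, List.prod_cons,
        ih t (by simpa using h), mono_coeff, List.cons.injEq]
      split_ifs <;> simp_all

lemma bullet_map_mono (l : List PT) : bullet (l.map (mono (K := K))) = mono (graft l) := by
  apply Subtype.ext; funext T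
  rw [bullet_val, mono_coeff, bulletCoeff]
  split_ifs with hT
  · rw [finsum_mem_eq_single _ (a := l) ?_ fun t ht htl => ?_, prod_zipWith_map_mono l l rfl,
      if_pos rfl]
    · exact ⟨by simp, hT.symm⟩
    · rw [prod_zipWith_map_mono l t (by simpa using ht.1), if_neg htl]
  · refine finsum_mem_of_eqOn_zero fun t ⟨hlen, hgraft⟩ => ?_
    rw [prod_zipWith_map_mono l t (by simpa using hlen),
      if_neg (by rintro rfl; exact hT hgraft.symm)]
    rfl

lemma onlyX_mono {S : PT} (hS : degy S = 0) : OnlyX (mono (K := K) S) := by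
  intro T hT
  rw [mono_coeff] at hT
  split_ifs at hT with hTS
  · rwa [hTS]
  · exact absurd rfl hT

noncomputable def monoX (S : PT) (hS : degy S = 0) : Kx K := ⟨mono S, onlyX_mono hS⟩

lemma bulletX_attach_map_monoX (l : List PT) (hl : ∀ S ∈ l, degy S = 0) {S : PT}
    (hS : degy S = 0) (hgraft : graft l = S) :
    bulletX (l.attach.map fun T => monoX (K := K) T.1 (hl T.1 T.2)) = monoX S hS := by
  apply Subtype.ext
  rw [bulletX_val, List.map_map]
  change bullet (l.attach.map fun T => mono T.1) = mono S
  rw [List.attach_map_val (f := mono), bullet_map_mono, hgraft]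

lemma graft_pair_none (S : PT) : graft [S, none] = S := by cases S <;> rfl
lemma graft_none_pair (S : PT) : graft [none, S] = S := by cases S <;> rfl

lemma bullet_pair_onePS (u : PSer K) : bullet [u, onePS] = u := by
  apply Subtype.ext; funext T
  rw [bullet_val, bulletCoeff, finsum_mem_eq_single _ (a := [T, none]) ?_ ?_]
  · simp [onePS, mono_coeff]
  · exact ⟨rfl, graft_pair_none T⟩
  · rintro t ⟨hlen, hgraft⟩ ht
    obtain ⟨S, S', rfl⟩ := List.length_eq_two.mp hlen
    obtain rfl | hS' := eq_or_ne S' none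
    · exact absurd (by rw [← hgraft, graft_pair_none]) ht
    · simp [onePS, mono_coeff, hS']

lemma bullet_onePS_pair (u : PSer K) : bullet [onePS, u] = u := by
  apply Subtype.ext; funext T
  rw [bullet_val, bulletCoeff, finsum_mem_eq_single _ (a := [none, T]) ?_ ?_]
  · simp [onePS, mono_coeff]
  · exact ⟨rfl, graft_none_pair T⟩
  · rintro t ⟨hlen, hgraft⟩ ht
    obtain ⟨S, S', rfl⟩ := List.length_eq_two.mp hlen
    obtain rfl | hS := eq_or_ne S none
    · exact absurd (by rw [← hgraft, graft_none_pair]) ht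
    · simp [onePS, mono_coeff, hS]

lemma PSer.neg_coeff (f : PSer K) (S : PT) : (-f).1 S = -f.1 S := rfl

lemma PSer.sub_coeff (f g : PSer K) (S : PT) : (f - g).1 S = f.1 S - g.1 S := by
  rw [sub_eq_add_neg, sub_eq_add_neg]
  rfl

lemma ordx_le_degx {f : PSer K} {S : PT} (h : f.1 S ≠ 0) : ordx f ≤ degx S :=
  iInf₂_le S h

lemma le_ordx {f : PSer K} {k : ℕ∞} (h : ∀ S, f.1 S ≠ 0 → k ≤ degx S) : k ≤ ordx f :=
  le_iInf₂ h

lemma ordx_ne_top {f : PSer K} (hf : f ≠ 0) : ordx f ≠ ⊤ := by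
  obtain ⟨S, hS⟩ : ∃ S, f.1 S ≠ 0 := by
    by_contra! h
    exact hf (Subtype.ext (funext h))
  exact ne_top_of_le_ne_top (ENat.natCast_ne_top _) (ordx_le_degx hS)

lemma min_ordx_le_ordx_add (f g : PSer K) : min (ordx f) (ordx g) ≤ ordx (f + g) := by
  refine le_ordx fun S hS => ?_
  by_cases hf : f.1 S = 0
  · exact (min_le_right _ _).trans (ordx_le_degx (by simpa [hf] using hS))
  · exact (min_le_left _ _).trans (ordx_le_degx hf)

lemma normx_pos {f : PSer K} (hf : f ≠ 0) : 0 < normx f := by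
  rw [normx, if_neg (ordx_ne_top hf)]
  positivity

lemma normx_le_pow {f : PSer K} {k : ℕ} (h : k ≤ ordx f) : normx f ≤ (2⁻¹ : ℝ) ^ k := by
  rw [normx]
  split_ifs with htop
  · positivity
  · exact pow_le_pow_of_le_one (by norm_num) (by norm_num)
      (by simpa using ENat.toNat_le_toNat h htop)

lemma normx_antitone {f g : PSer K} (h : ordx g ≤ ordx f) : normx f ≤ normx g := by
  by_cases htop : ordx g = ⊤
  · rw [htop, top_le_iff] at h
    rw [normx, normx, if_pos h, if_pos htop]
  · rw [normx.eq_1 g, if_neg htop]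
    exact normx_le_pow ((ENat.natCast_toNat htop).trans_le h)

lemma normx_add_le (f g : PSer K) : normx (f + g) ≤ max (normx f) (normx g) := by
  rcases le_total (ordx f) (ordx g) with h | h
  · exact (normx_antitone (min_eq_left h ▸ min_ordx_le_ordx_add f g)).trans (le_max_left _ _)
  · exact (normx_antitone (min_eq_right h ▸ min_ordx_le_ordx_add f g)).trans (le_max_right _ _)

lemma normx_neg (f : PSer K) : normx (-f) = normx f := by
  have hsupp : {S : PT | (-f).1 S ≠ 0} = {S : PT | f.1 S ≠ 0} := by
    ext S
    simp only [Set.mem_ofPred_eq, PSer.neg_coeff, neg_ne_zero]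
  rw [normx, normx, ordx, ordx, hsupp]

lemma distx_comm (f g : PSer K) : distx f g = distx g f := by
  rw [distx, distx, ← neg_sub, normx_neg]

lemma distx_le_max (f g h : PSer K) : distx f h ≤ max (distx f g) (distx g h) := by
  rw [distx, ← sub_add_sub_cancel f g h]
  exact normx_add_le _ _

lemma eq_of_forall_distx_lt {f g : PSer K} (h : ∀ ε : ℝ, 0 < ε → distx f g < ε) : f = g := by
  by_contra hfg
  exact lt_irrefl _ (h _ (normx_pos (sub_ne_zero.mpr hfg)))

noncomputable def trunc (f : PSer K) (n : ℕ) : PSer K := by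
  classical
  exact ⟨fun S => if degx S ≤ n then f.1 S else 0, fun m => (f.2 m).subset fun S ⟨hS, hdeg⟩ =>
    ⟨fun h0 => hS (by simp [h0]), hdeg⟩⟩

open Classical in
lemma trunc_coeff (f : PSer K) (n : ℕ) (S : PT) :
    (trunc f n).1 S = if degx S ≤ n then f.1 S else 0 := rfl

lemma trunc_support_finite (f : PSer K) (n : ℕ) : {S : PT | (trunc f n).1 S ≠ 0}.Finite := by
  refine ((Set.finite_Iic n).biUnion fun k _ => f.2 k).subset fun S hS => ?_
  rw [Set.mem_ofPred_eq, trunc_coeff] at hS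
  split_ifs at hS with hdeg
  · exact Set.mem_biUnion (Set.mem_Iic.mpr hdeg) ⟨hS, rfl⟩
  · exact absurd rfl hS

lemma le_ordx_sub_trunc (f : PSer K) (n : ℕ) : n + 1 ≤ ordx (f - trunc f n) := by
  refine le_ordx fun S hS => ?_
  rw [PSer.sub_coeff, trunc_coeff] at hS
  split_ifs at hS with hdeg
  · exact absurd (sub_self _) hS
  · exact_mod_cast Nat.succ_le_of_lt (not_le.mp hdeg)

lemma onlyX_trunc {f : PSer K} (hf : OnlyX f) (n : ℕ) : OnlyX (trunc f n) := by
  intro S hS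
  rw [trunc_coeff] at hS
  split_ifs at hS
  · exact hf S hS
  · exact absurd rfl hS

noncomputable def truncX (f : Kx K) (n : ℕ) : Kx K := ⟨trunc f.1 n, onlyX_trunc f.2 n⟩

lemma exists_distKx_truncX_lt (f : Kx K) {ε : ℝ} (hε : 0 < ε) :
    ∃ n, distKx (truncX f n) f < ε := by
  obtain ⟨n, hn⟩ := exists_pow_lt_of_lt_one hε (by norm_num : (2⁻¹ : ℝ) < 1)
  refine ⟨n, ?_⟩
  calc distKx (truncX f n) f = normx (f.1 - trunc f.1 n) := distx_comm _ _
    _ ≤ (2⁻¹ : ℝ) ^ (n + 1) := normx_le_pow (by exact_mod_cast le_ordx_sub_trunc f.1 n)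
    _ ≤ (2⁻¹ : ℝ) ^ n := pow_le_pow_of_le_one (by norm_num) (by norm_num) n.le_succ
    _ < ε := hn

noncomputable def coeffₗ (S : PT) : PSer K →ₗ[K] K where
  toFun f := f.1 S
  map_add' _ _ := rfl
  map_smul' _ _ := rfl

lemma eq_sum_smul_mono (f : PSer K) {s : Finset PT} (hs : ∀ S, f.1 S ≠ 0 → S ∈ s) :
    f = ∑ S ∈ s, f.1 S • mono S := by
  apply Subtype.ext; funext T
  change f.1 T = coeffₗ T (∑ S ∈ s, f.1 S • mono S)
  simp only [map_sum]
  change f.1 T = ∑ S ∈ s, f.1 S * (mono S).1 T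
  simp only [mono_coeff, mul_ite, mul_one, mul_zero, Finset.sum_ite_eq]
  split_ifs with hT
  · rfl
  · by_contra h
    exact hT (hs T h)

def monomialsX : Set (Kx K) := {f | ∃ S hS, monoX S hS = f}

lemma mem_span_monomialsX {f : Kx K} (hf : {S | f.1.1 S ≠ 0}.Finite) :
    f ∈ Submodule.span K monomialsX := by
  have hdeg : ∀ S ∈ hf.toFinset, degy S = 0 := fun S hS => f.2 S (hf.mem_toFinset.mp hS)
  have hsum : f = ∑ S ∈ hf.toFinset.attach, f.1.1 S • monoX S.1 (hdeg S.1 S.2) := by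
    apply Subtype.ext
    rw [Submodule.coe_sum]
    change f.1 = ∑ S ∈ hf.toFinset.attach, f.1.1 S • mono S.1
    rw [Finset.sum_attach hf.toFinset fun S => f.1.1 S • mono S]
    exact eq_sum_smul_mono f.1 fun S hS => hf.mem_toFinset.mpr hS
  rw [hsum]
  exact Submodule.sum_mem _ fun S _ =>
    Submodule.smul_mem _ _ (Submodule.subset_span ⟨S.1, hdeg S.1 S.2, rfl⟩)

lemma contWrt_val : ContWrt distKx distx fun f : Kx K => f.1 :=
  fun _ ε hε => ⟨ε, hε, fun _ hb => hb⟩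

theorem linearMap_ext_of_monoX {F G : Kx K →ₗ[K] PSer K} (hF : ContWrt distKx distx F)
    (hG : ContWrt distKx distx G) (h : ∀ S hS, F (monoX S hS) = G (monoX S hS)) : F = G := by
  have hspan : ∀ f ∈ Submodule.span K monomialsX, F f = G f :=
    fun f hf => LinearMap.eqOn_span (by rintro _ ⟨S, hS, rfl⟩; exact h S hS) hf
  refine LinearMap.ext fun f => eq_of_forall_distx_lt fun ε hε => ?_
  obtain ⟨δF, hδF, hFf⟩ := hF f ε hε
  obtain ⟨δG, hδG, hGf⟩ := hG f ε hε
  obtain ⟨n, hn⟩ := exists_distKx_truncX_lt f (lt_min hδF hδG)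
  have htrunc := hspan (truncX f n) (mem_span_monomialsX (trunc_support_finite f.1 n))
  calc distx (F f) (G f)
      ≤ max (distx (F f) (F (truncX f n))) (distx (F (truncX f n)) (G f)) := distx_le_max _ _ _
    _ < ε := max_lt (by rw [distx_comm]; exact hFf _ (hn.trans_le (min_le_left _ _)))
        (by rw [htrunc]; exact hGf _ (hn.trans_le (min_le_right _ _)))

theorem monoX_induction {P : Kx K → Prop} (h_one : P oneX) (h_x : P xX)
    (h_bullet : ∀ fs : List (Kx K), 2 ≤ fs.length → (∀ f ∈ fs, P f) → P (bulletX fs)) :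
    ∀ (S : PT) (hS : degy S = 0), P (monoX S hS)
  | none, _ => h_one
  | some (.leaf .vx), _ => h_x
  | some (.leaf .vy), hS => absurd hS (by simp [degy, PTree.countLeaf])
  | some (.node t₁ t₂ ts), hS => by
    have hl := degv_eq_zero_of_mem ((graft_nodeChildren t₁ t₂ ts).symm ▸ hS : degy (graft _) = 0)
    rw [← bulletX_attach_map_monoX _ hl hS (graft_nodeChildren t₁ t₂ ts)]
    refine h_bullet _ (by simp [nodeChildren]) fun f hf => ?_
    obtain ⟨⟨S, hSmem⟩, -, rfl⟩ := List.mem_map.mp hf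
    exact monoX_induction h_one h_x h_bullet S (hl S hSmem)
termination_by S => sizeOf S
decreasing_by exact sizeOf_lt_of_mem_nodeChildren hSmem

theorem linearMap_ext_of_bulletX {F G : Kx K →ₗ[K] PSer K} (hF : ContWrt distKx distx F)
    (hG : ContWrt distKx distx G) (h_one : F oneX = G oneX) (h_x : F xX = G xX)
    (h_bullet : ∀ fs : List (Kx K), 2 ≤ fs.length → (∀ f ∈ fs, F f = G f) →
      F (bulletX fs) = G (bulletX fs)) : F = G :=
  linearMap_ext_of_monoX hF hG (monoX_induction h_one h_x h_bullet)

lemma IsUDeriv.map_oneX {d : Kx K → PSer K} (hd : IsUDeriv d) : d oneX = 0 := by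
  have h11 : bulletX [oneX, oneX] = (oneX : Kx K) :=
    Subtype.ext (by rw [bulletX_val]; exact bullet_pair_onePS onePS)
  have h := hd.leibniz [oneX, oneX] le_rfl
  simp only [h11, List.length_cons, List.length_nil, Nat.reduceAdd, Fin.sum_univ_two] at h
  change d oneX = bullet [d oneX, onePS] + bullet [onePS, d oneX] at h
  rw [bullet_pair_onePS, bullet_onePS_pair] at h
  exact left_eq_add.mp h

lemma IsSubstHom.apply_val {g : Kx K} {h : PSer K} {ψ : PSer K → PSer K} {φ : Kx K → Kx K}
    (hψ : IsSubstHom g.1 h ψ) (hφ : IsSubstHomX g φ) (f : Kx K) : ψ f.1 = (φ f).1 := by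
  refine LinearMap.congr_fun (linearMap_ext_of_bulletX
    (F := (hψ.linear.mk' ψ).comp (kxSub K).subtype) (G := (kxSub K).subtype.comp (hφ.linear.mk' φ))
    (hψ.cont.comp contWrt_val) (contWrt_val.comp hφ.cont) ?_ ?_ fun fs hlen hfs => ?_) f
  · change ψ onePS = (φ oneX).1
    rw [hψ.map_one, hφ.map_one]
    rfl
  · change ψ Xps = (φ xX).1
    rw [hψ.map_X, hφ.map_X]
  · change ψ (bulletX fs).1 = (φ (bulletX fs)).1
    rw [bulletX_val, hψ.map_graft _ (by simpa using hlen), hφ.map_graft fs hlen, bulletX_val,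
      List.map_map, List.map_map]
    exact congrArg bullet (List.map_congr_left hfs)

lemma IsSubstHom.apply_deriv_bulletX {g : Kx K} {d : Kx K → PSer K} {ψ : PSer K → PSer K}
    {φ : Kx K → Kx K} (hψ : IsSubstHom g.1 (d g) ψ) (hφ : IsSubstHomX g φ) (hd : IsUDeriv d)
    {fs : List (Kx K)} (hlen : 2 ≤ fs.length) (hfs : ∀ f ∈ fs, ψ (d f) = d (φ f)) :
    ψ (d (bulletX fs)) = d (φ (bulletX fs)) := by
  rw [hd.leibniz fs hlen, hφ.map_graft fs hlen, hd.leibniz _ (by simpa using hlen)]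
  change hψ.linear.mk' ψ _ = _
  rw [map_sum, ← Fin.sum_congr' _ (List.length_map φ).symm]
  have hvals : fs.map (ψ ∘ fun f => f.1) = fs.map ((fun f => f.1) ∘ φ) :=
    List.map_congr_left fun f _ => hψ.apply_val hφ f
  refine Finset.sum_congr rfl fun i _ => ?_
  rw [IsLinearMap.mk'_apply, hψ.map_graft _ (by simpa using hlen), List.map_set, List.map_map,
    List.map_map, hvals, hfs _ (List.get_mem _ _)]
  simp

end Planar

open Planar in
theorem planar_chain_rule_general (K : Type) [Field K]
    (g : Kx K)
    (φ : Kx K → Kx K) (hφ : IsSubstHomX g φ)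
    (d : Kx K → PSer K) (hd : IsUDeriv d)
    (dφ : PSer K → PSer K) (hdφ : IsSubstHom g.1 (d g) dφ) :
    ∀ f : Kx K, dφ (d f) = d (φ f) := by
  refine LinearMap.congr_fun (linearMap_ext_of_bulletX
    (F := (hdφ.linear.mk' dφ).comp (hd.linear.mk' d))
    (G := (hd.linear.mk' d).comp (hφ.linear.mk' φ))
    (hdφ.cont.comp hd.cont) (hd.cont.comp hφ.cont) ?_ ?_ fun fs hlen hfs => ?_)
  · change dφ (d oneX) = d (φ oneX)
    rw [hd.map_oneX, hφ.map_one, hd.map_oneX, hdφ.linear.map_zero]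
  · change dφ (d xX) = d (φ xX)
    rw [hd.map_X, hdφ.map_Y, hφ.map_X]
  · exact hdφ.apply_deriv_bulletX hφ hd hlen hfs

open Planar in
/-- Planar chain rule: for `g ∈ K{{x}}` with `ord_x(g) ≥ 1`,
`φ = φ_g : K{{x}} → K{{x}}` the continuous `K`-algebra homomorphism with `φ(x) = g`,
and `dφ : K{{x,y} → K{{x,y}` the continuous `K`-algebra homomorphism with `dφ(x) = g`
and `dφ(y) = dg`, one has `(dφ) ∘ d = d ∘ φ` on `K{{x}}`. -/
theorem planar_chain_rule (K : Type) [Field K]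
    (g : Kx K) (hg : 1 ≤ ordx g.1)
    (φ : Kx K → Kx K) (hφ : IsSubstHomX g φ)
    (d : Kx K → PSer K) (hd : IsUDeriv d)
    (dφ : PSer K → PSer K) (hdφ : IsSubstHom g.1 (d g) dφ) :
    ∀ f : Kx K, dφ (d f) = d (φ f) :=
  planar_chain_rule_general K g φ hφ d hd dφ hdφ
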